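/- Let P₀,…,P_m be a symmetric Clifford system on ℝ^{2l}, P = Σ_β a_β P_β with Σ a_β² = 1, and let x be a unit vector with Σ_α ⟨P_α x, x⟩² = 1. Set 𝒫 = Σ_α ⟨P_α x, x⟩ P_α and y = Px − ⟨Px, x⟩x. Then y + 𝒫y = 0, i.e., y lies in the (−1)-eigenspace of 𝒫. -/

import Mathlib

/-!
With `c α = ⟨P α x, x⟩`, the Clifford relations give `𝒫² = (∑ c α ²) • 1 = 1`, so the symmetric
matrix `𝒫` is orthogonal; as `⟨𝒫 x, x⟩ = ∑ c α ² = 1 = ⟨x, x⟩`, the equality case of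
Cauchy–Schwarz forces `𝒫 x = x`. The Clifford relations also give `P 𝒫 + 𝒫 P = 2 ⟨P x, x⟩ • 1`,
hence `𝒫 (P x - ⟨P x, x⟩ x) = 2 ⟨P x, x⟩ x - P x - ⟨P x, x⟩ x = -(P x - ⟨P x, x⟩ x)`.
-/

open Matrix

section CliffordRelations

variable {ι R A : Type*} [Fintype ι] [DecidableEq ι] [Ring A] {P : ι → A}

theorem anticomm_sum_smul [CommRing R] [Algebra R A]
    (hP : ∀ i j, P i * P j + P j * P i = if i = j then (2 : R) • (1 : A) else 0) (u v : ι → R) :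
    (∑ i, u i • P i) * (∑ j, v j • P j) + (∑ j, v j • P j) * (∑ i, u i • P i) =
      (2 * ∑ i, u i * v i) • (1 : A) := by
  simp only [Fintype.sum_mul_sum, smul_mul_smul_comm]
  rw [Finset.sum_comm (γ := ι) (f := fun j i => (v j * u i) • (P j * P i))]
  simp only [mul_comm (v _) (u _), ← Finset.sum_add_distrib, ← smul_add, hP, smul_ite, smul_zero,
    Finset.sum_ite_eq, Finset.mem_univ, if_true, smul_smul, Finset.mul_sum, Finset.sum_smul]
  simp only [mul_comm]

theorem sum_smul_mul_self [Field R] [NeZero (2 : R)] [Algebra R A]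
    (hP : ∀ i j, P i * P j + P j * P i = if i = j then (2 : R) • (1 : A) else 0) (u : ι → R) :
    (∑ i, u i • P i) * (∑ i, u i • P i) = (∑ i, u i ^ 2) • (1 : A) := by
  have h := anticomm_sum_smul hP u u
  rw [← two_smul R, mul_smul] at h
  simpa only [sq] using smul_right_injective A (two_ne_zero (α := R)) h

end CliffordRelations

section Matrices

variable {ι n R : Type*} [Fintype ι] [Fintype n]

theorem sum_smul_mulVec_dotProduct [CommRing R] (P : ι → Matrix n n R) (u : ι → R) (x : n → R) :
    (∑ i, u i • P i) *ᵥ x ⬝ᵥ x = ∑ i, u i * (P i *ᵥ x ⬝ᵥ x) := by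
  simp only [sum_mulVec, sum_dotProduct, smul_mulVec, smul_dotProduct, smul_eq_mul]

omit [Fintype n] in
theorem isSymm_sum_smul [CommRing R] {P : ι → Matrix n n R} (hP : ∀ i, (P i).IsSymm) (u : ι → R) :
    (∑ i, u i • P i).IsSymm := by
  simp only [IsSymm, transpose_sum, transpose_smul, fun i => (hP i).eq]

theorem mulVec_eq_self_of_transpose_mul_self [CommRing R] [LinearOrder R] [IsStrictOrderedRing R]
    [DecidableEq n] {Q : Matrix n n R} (hQ : Qᵀ * Q = 1) {x : n → R}
    (hx : Q *ᵥ x ⬝ᵥ x = x ⬝ᵥ x) : Q *ᵥ x = x := by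
  have hnorm : Q *ᵥ x ⬝ᵥ Q *ᵥ x = x ⬝ᵥ x := by
    rw [dotProduct_mulVec, ← mulVec_transpose, mulVec_mulVec, hQ, one_mulVec]
  have h : (Q *ᵥ x - x) ⬝ᵥ (Q *ᵥ x - x) = 0 := by
    rw [sub_dotProduct, dotProduct_sub, dotProduct_sub, hnorm, hx, dotProduct_comm x (Q *ᵥ x), hx]
    ring
  exact sub_eq_zero.mp (dotProduct_self_eq_zero.mp h)

theorem mulVec_sub_smul_eq_neg_of_anticomm [CommRing R] [DecidableEq n] {P Q : Matrix n n R}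
    {s : R} (hPQ : P * Q + Q * P = (2 * s) • 1) {x : n → R} (hx : Q *ᵥ x = x) :
    Q *ᵥ (P *ᵥ x - s • x) = -(P *ᵥ x - s • x) := by
  have hQP : Q * P = (2 * s) • 1 - P * Q := eq_sub_of_add_eq' hPQ
  rw [mulVec_sub, mulVec_smul, hx, mulVec_mulVec, hQP, sub_mulVec, smul_mulVec, one_mulVec,
    ← mulVec_mulVec, hx]
  module

end Matrices

theorem y_in_minus_eigenspace_general (l m : ℕ)
    (P : Fin (m + 1) → Matrix (Fin (2 * l)) (Fin (2 * l)) ℝ)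
    (hsym : ∀ i, (P i)ᵀ = P i)
    (hcliff : ∀ i j, P i * P j + P j * P i =
      if i = j then (2 : ℝ) • (1 : Matrix (Fin (2 * l)) (Fin (2 * l)) ℝ) else 0)
    (a : Fin (m + 1) → ℝ)
    (x : Fin (2 * l) → ℝ) (hx : x ⬝ᵥ x = 1)
    (hM : ∑ α, ((P α).mulVec x ⬝ᵥ x) ^ 2 = 1) :
    (∑ β, a β • P β).mulVec x - ((∑ β, a β • P β).mulVec x ⬝ᵥ x) • x +
      (∑ α, ((P α).mulVec x ⬝ᵥ x) • P α).mulVec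
        ((∑ β, a β • P β).mulVec x - ((∑ β, a β • P β).mulVec x ⬝ᵥ x) • x) = 0 := by
  set c : Fin (m + 1) → ℝ := fun α => P α *ᵥ x ⬝ᵥ x
  have hQQ : (∑ α, c α • P α) * (∑ α, c α • P α) = 1 := by
    rw [sum_smul_mul_self hcliff, hM, one_smul]
  have hQx : (∑ α, c α • P α) *ᵥ x = x := by
    refine mulVec_eq_self_of_transpose_mul_self ?_ ?_
    · rw [(isSymm_sum_smul hsym c).eq, hQQ]
    · simpa only [sum_smul_mulVec_dotProduct, hx, sq] using hM
  have hanti := anticomm_sum_smul hcliff a c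
  rw [← sum_smul_mulVec_dotProduct] at hanti
  rw [mulVec_sub_smul_eq_neg_of_anticomm hanti hQx, add_neg_cancel]

/-- y = Px − ⟨Px,x⟩x lies in the (−1)-eigenspace of 𝒫, i.e. y + 𝒫y = 0. -/
theorem y_in_minus_eigenspace (l m : ℕ)
    (P : Fin (m + 1) → Matrix (Fin (2 * l)) (Fin (2 * l)) ℝ)
    (hsym : ∀ i, (P i)ᵀ = P i)
    (hcliff : ∀ i j, P i * P j + P j * P i =
      if i = j then (2 : ℝ) • (1 : Matrix (Fin (2 * l)) (Fin (2 * l)) ℝ) else 0)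
    (a : Fin (m + 1) → ℝ) (ha : ∑ β, (a β) ^ 2 = 1)
    (x : Fin (2 * l) → ℝ) (hx : x ⬝ᵥ x = 1)
    (hM : ∑ α, ((P α).mulVec x ⬝ᵥ x) ^ 2 = 1) :
    (∑ β, a β • P β).mulVec x - ((∑ β, a β • P β).mulVec x ⬝ᵥ x) • x +
      (∑ α, ((P α).mulVec x ⬝ᵥ x) • P α).mulVec
        ((∑ β, a β • P β).mulVec x - ((∑ β, a β • P β).mulVec x ⬝ᵥ x) • x) = 0 :=
  y_in_minus_eigenspace_general l m P hsym hcliff a x hx hM
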